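/- arXiv:1109.4102 — 4 statements merged into one kernel-verified Lean document; each statement's English description precedes it below -/
import Mathlib

section
/- Let C_g : [t₀, t₀+T] → ℝ be a bounded measurable price signal with C_g(t) ≥ 0, let K, Z > 0, η_B ∈ (0,1], and let u be integrable with ∫ u ≥ 0. Define J₊ = ∫ C_g(τ)·max(u(τ),0) dτ and J₋ = ∫ (C_g(τ) − KZ/η_B)·min(u(τ),0) dτ. If K ≥ (sup_t C_g − inf_t C_g)·η_B/Z, then J₊ + J₋ ≥ 0. -/
open MeasureTheory

theorem aging_cost_dominates (t₀ T K Z η_B : ℝ) (hT : 0 ≤ T)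
    (hK : 0 < K) (hZ : 0 < Z) (hη : 0 < η_B) (hη1 : η_B ≤ 1)
    (Cg u : ℝ → ℝ) (hCgm : Measurable Cg)
    (hCg0 : ∀ t ∈ Set.Icc t₀ (t₀ + T), 0 ≤ Cg t)
    (hbdd : BddAbove (Cg '' Set.Icc t₀ (t₀ + T)))
    (hu : IntervalIntegrable u volume t₀ (t₀ + T))
    (hJp : IntervalIntegrable (fun τ => Cg τ * max (u τ) 0) volume t₀ (t₀ + T))
    (hJm : IntervalIntegrable (fun τ => (Cg τ - K * Z / η_B) * min (u τ) 0) volume t₀ (t₀ + T))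
    (hintu : 0 ≤ ∫ τ in t₀..(t₀ + T), u τ)
    (hKbig : K ≥ (sSup (Cg '' Set.Icc t₀ (t₀ + T)) - sInf (Cg '' Set.Icc t₀ (t₀ + T))) * η_B / Z) :
    0 ≤ (∫ τ in t₀..(t₀ + T), Cg τ * max (u τ) 0) +
        (∫ τ in t₀..(t₀ + T), (Cg τ - K * Z / η_B) * min (u τ) 0) := by
  set S := sSup (Cg '' Set.Icc t₀ (t₀ + T)) with hS
  set I := sInf (Cg '' Set.Icc t₀ (t₀ + T)) with hI
  have hle : t₀ ≤ t₀ + T := by linarith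
  have hne : (Cg '' Set.Icc t₀ (t₀ + T)).Nonempty :=
    ⟨Cg t₀, Set.mem_image_of_mem _ (by constructor <;> linarith)⟩
  have hbb : BddBelow (Cg '' Set.Icc t₀ (t₀ + T)) := by
    refine ⟨0, fun x hx => ?_⟩
    obtain ⟨t, ht, rfl⟩ := hx
    exact hCg0 t ht
  have hI0 : 0 ≤ I := le_csInf hne (fun x hx => by
    obtain ⟨t, ht, rfl⟩ := hx; exact hCg0 t ht)
  have hc : S - K * Z / η_B ≤ I := by
    have h1 : (S - I) * η_B / Z ≤ K := hKbig
    have h2 : (S - I) * η_B ≤ K * Z := (div_le_iff₀ hZ).mp h1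
    have h3 : S - I ≤ K * Z / η_B := by
      rw [le_div_iff₀ hη]; exact h2
    linarith
  have key : ∀ t ∈ Set.Icc t₀ (t₀ + T),
      I * u t ≤ Cg t * max (u t) 0 + (Cg t - K * Z / η_B) * min (u t) 0 := by
    intro t ht
    have hIle : I ≤ Cg t := csInf_le hbb (Set.mem_image_of_mem _ ht)
    have hSle : Cg t ≤ S := le_csSup hbdd (Set.mem_image_of_mem _ ht)
    have h1 : I * max (u t) 0 ≤ Cg t * max (u t) 0 :=
      mul_le_mul_of_nonneg_right hIle (le_max_right _ _)
    have h2 : I * min (u t) 0 ≤ (Cg t - K * Z / η_B) * min (u t) 0 :=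
      mul_le_mul_of_nonpos_right (by linarith) (min_le_right _ _)
    have : I * u t = I * max (u t) 0 + I * min (u t) 0 := by
      rw [← mul_add, max_add_min, add_zero]
    linarith
  have hIu : IntervalIntegrable (fun t => I * u t) volume t₀ (t₀ + T) :=
    hu.const_mul I
  have hsum : IntervalIntegrable
      (fun t => Cg t * max (u t) 0 + (Cg t - K * Z / η_B) * min (u t) 0)
      volume t₀ (t₀ + T) := hJp.add hJm
  have hmono : (∫ t in t₀..(t₀ + T), I * u t) ≤
      ∫ t in t₀..(t₀ + T), (Cg t * max (u t) 0 + (Cg t - K * Z / η_B) * min (u t) 0) :=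
    intervalIntegral.integral_mono_on hle hIu hsum key
  rw [intervalIntegral.integral_const_mul] at hmono
  rw [intervalIntegral.integral_add hJp hJm] at hmono
  have : 0 ≤ I * ∫ t in t₀..(t₀ + T), u t := mul_nonneg hI0 hintu
  linarith
end

section
/- Let C_g : [t₀, t₀+T] → ℝ be bounded measurable with C_g ≥ 0, K, Z > 0, η_B ∈ (0,1], T > 0, M > 0. Suppose K < (sup_t C_g − inf_t C_g)·η_B/Z. Let u be integrable with ∫ u ≥ 0 and u(t) ≤ M for all t. Then ∫ C_g(τ)·max(u(τ),0) dτ + ∫ (C_g(τ) − KZ/η_B)·min(u(τ),0) dτ ≥ −(sup_t C_g − inf_t C_g − KZ/η_B)·T·M. -/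
/-!
Split `u = max u 0 + min u 0` and write `P = ∫ max u 0`, `N = ∫ min u 0`. Bounding the price by
its infimum on the charging part and by its supremum on the discharging part (where `min u 0 ≤ 0`
reverses the inequality) gives `J ≥ inf C_g · P + (sup C_g − KZ/η_B) · N`. Since `∫ u ≥ 0` means
`N ≥ −P`, this is at least `−(sup C_g − inf C_g − KZ/η_B) · P`, and `P ≤ T M` because `u ≤ M`.
-/

open MeasureTheory Set

variable {a b : ℝ} {μ : Measure ℝ} {u g : ℝ → ℝ}

theorem IntervalIntegrable.max_zero (hu : IntervalIntegrable u μ a b) :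
    IntervalIntegrable (fun t => max (u t) 0) μ a b :=
  ⟨hu.1.pos_part, hu.2.pos_part⟩

theorem IntervalIntegrable.min_zero (hu : IntervalIntegrable u μ a b) :
    IntervalIntegrable (fun t => min (u t) 0) μ a b :=
  ⟨hu.1.inf (integrable_zero _ _ _), hu.2.inf (integrable_zero _ _ _)⟩

namespace intervalIntegral

theorem integral_max_zero_add_integral_min_zero (hu : IntervalIntegrable u μ a b) :
    (∫ t in a..b, max (u t) 0 ∂μ) + ∫ t in a..b, min (u t) 0 ∂μ = ∫ t in a..b, u t ∂μ := by
  rw [← integral_add hu.max_zero hu.min_zero]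
  simp only [max_add_min, add_zero]

theorem const_mul_integral_max_zero_le (hab : a ≤ b) {m : ℝ} (hu : IntervalIntegrable u μ a b)
    (hgu : IntervalIntegrable (fun t => g t * max (u t) 0) μ a b)
    (hm : ∀ t ∈ Icc a b, m ≤ g t) :
    m * ∫ t in a..b, max (u t) 0 ∂μ ≤ ∫ t in a..b, g t * max (u t) 0 ∂μ := by
  rw [← integral_const_mul]
  refine integral_mono_on hab (hu.max_zero.const_mul m) hgu fun t ht => ?_
  exact mul_le_mul_of_nonneg_right (hm t ht) (le_max_right _ _)

theorem const_mul_integral_min_zero_le (hab : a ≤ b) {m : ℝ} (hu : IntervalIntegrable u μ a b)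
    (hgu : IntervalIntegrable (fun t => g t * min (u t) 0) μ a b)
    (hm : ∀ t ∈ Icc a b, g t ≤ m) :
    m * ∫ t in a..b, min (u t) 0 ∂μ ≤ ∫ t in a..b, g t * min (u t) 0 ∂μ := by
  rw [← integral_const_mul]
  refine integral_mono_on hab (hu.min_zero.const_mul m) hgu fun t ht => ?_
  exact mul_le_mul_of_nonpos_right (hm t ht) (min_le_right _ _)

theorem integral_max_zero_le (hab : a ≤ b) {M : ℝ} (hM : 0 ≤ M)
    (hu : IntervalIntegrable u volume a b) (hub : ∀ t ∈ Icc a b, u t ≤ M) :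
    ∫ t in a..b, max (u t) 0 ≤ (b - a) * M := by
  calc ∫ t in a..b, max (u t) 0
      ≤ ∫ _ in a..b, M :=
        integral_mono_on hab hu.max_zero intervalIntegrable_const
          fun t ht => max_le (hub t ht) hM
    _ = (b - a) * M := by rw [integral_const, smul_eq_mul]

theorem neg_mul_le_integral_max_zero_add_integral_min_zero (hab : a ≤ b)
    {lo hi c M : ℝ} (hlo0 : 0 ≤ lo) (hc : c ≤ hi - lo) (hM : 0 ≤ M)
    (hlo : ∀ t ∈ Icc a b, lo ≤ g t) (hhi : ∀ t ∈ Icc a b, g t ≤ hi)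
    (hu : IntervalIntegrable u volume a b)
    (hJp : IntervalIntegrable (fun t => g t * max (u t) 0) volume a b)
    (hJm : IntervalIntegrable (fun t => (g t - c) * min (u t) 0) volume a b)
    (hintu : 0 ≤ ∫ t in a..b, u t) (hub : ∀ t ∈ Icc a b, u t ≤ M) :
    -((hi - lo - c) * (b - a) * M) ≤
      (∫ t in a..b, g t * max (u t) 0) + ∫ t in a..b, (g t - c) * min (u t) 0 := by
  set P := ∫ t in a..b, max (u t) 0
  set N := ∫ t in a..b, min (u t) 0
  have hJp_ge : lo * P ≤ ∫ t in a..b, g t * max (u t) 0 :=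
    const_mul_integral_max_zero_le hab hu hJp hlo
  have hJm_ge : (hi - c) * N ≤ ∫ t in a..b, (g t - c) * min (u t) 0 :=
    const_mul_integral_min_zero_le hab hu hJm fun t ht => by linarith [hhi t ht]
  have hNP : -P ≤ N := by linarith [integral_max_zero_add_integral_min_zero (μ := volume) hu]
  have hPM : P ≤ (b - a) * M := integral_max_zero_le hab hM hu hub
  nlinarith [mul_le_mul_of_nonneg_left hNP (by linarith : 0 ≤ hi - c),
    mul_le_mul_of_nonneg_left hPM (by linarith : 0 ≤ hi - lo - c)]

end intervalIntegral

open intervalIntegral in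
theorem savings_lower_bound_general (t₀ T K Z η_B M : ℝ) (hT : 0 < T) (hM : 0 < M)
    (hZ : 0 < Z) (hη : 0 < η_B)
    (Cg u : ℝ → ℝ)
    (hCg0 : ∀ t ∈ Set.Icc t₀ (t₀ + T), 0 ≤ Cg t)
    (hbdd : BddAbove (Cg '' Set.Icc t₀ (t₀ + T)))
    (hKsmall : K < (sSup (Cg '' Set.Icc t₀ (t₀ + T)) - sInf (Cg '' Set.Icc t₀ (t₀ + T))) * η_B / Z)
    (hu : IntervalIntegrable u volume t₀ (t₀ + T))
    (hJp : IntervalIntegrable (fun τ => Cg τ * max (u τ) 0) volume t₀ (t₀ + T))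
    (hJm : IntervalIntegrable (fun τ => (Cg τ - K * Z / η_B) * min (u τ) 0) volume t₀ (t₀ + T))
    (hintu : 0 ≤ ∫ τ in t₀..(t₀ + T), u τ)
    (hub : ∀ t ∈ Set.Icc t₀ (t₀ + T), u t ≤ M) :
    (∫ τ in t₀..(t₀ + T), Cg τ * max (u τ) 0) +
      (∫ τ in t₀..(t₀ + T), (Cg τ - K * Z / η_B) * min (u τ) 0) ≥
      -((sSup (Cg '' Set.Icc t₀ (t₀ + T)) - sInf (Cg '' Set.Icc t₀ (t₀ + T)) - K * Z / η_B) * T * M) := by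
  set I := Icc t₀ (t₀ + T)
  have hbdd_below : BddBelow (Cg '' I) := ⟨0, forall_mem_image.2 hCg0⟩
  have hinf0 : 0 ≤ sInf (Cg '' I) :=
    le_csInf ⟨Cg t₀, mem_image_of_mem Cg (left_mem_Icc.2 (by linarith))⟩ (forall_mem_image.2 hCg0)
  have hc : K * Z / η_B ≤ sSup (Cg '' I) - sInf (Cg '' I) := by
    rw [lt_div_iff₀ hZ] at hKsmall
    exact (div_le_iff₀ hη).2 hKsmall.le
  have h := neg_mul_le_integral_max_zero_add_integral_min_zero (by linarith) hinf0 hc hM.le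
    (fun t ht => csInf_le hbdd_below (mem_image_of_mem Cg ht))
    (fun t ht => le_csSup hbdd (mem_image_of_mem Cg ht)) hu hJp hJm hintu hub
  rwa [add_sub_cancel_left] at h

theorem savings_lower_bound (t₀ T K Z η_B M : ℝ) (hT : 0 < T) (hM : 0 < M)
    (hK : 0 < K) (hZ : 0 < Z) (hη : 0 < η_B) (hη1 : η_B ≤ 1)
    (Cg u : ℝ → ℝ) (hCgm : Measurable Cg)
    (hCg0 : ∀ t ∈ Set.Icc t₀ (t₀ + T), 0 ≤ Cg t)
    (hbdd : BddAbove (Cg '' Set.Icc t₀ (t₀ + T)))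
    (hKsmall : K < (sSup (Cg '' Set.Icc t₀ (t₀ + T)) - sInf (Cg '' Set.Icc t₀ (t₀ + T))) * η_B / Z)
    (hu : IntervalIntegrable u volume t₀ (t₀ + T))
    (hJp : IntervalIntegrable (fun τ => Cg τ * max (u τ) 0) volume t₀ (t₀ + T))
    (hJm : IntervalIntegrable (fun τ => (Cg τ - K * Z / η_B) * min (u τ) 0) volume t₀ (t₀ + T))
    (hintu : 0 ≤ ∫ τ in t₀..(t₀ + T), u τ)
    (hub : ∀ t ∈ Set.Icc t₀ (t₀ + T), u t ≤ M) :
    (∫ τ in t₀..(t₀ + T), Cg τ * max (u τ) 0) +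
      (∫ τ in t₀..(t₀ + T), (Cg τ - K * Z / η_B) * min (u τ) 0) ≥
      -((sSup (Cg '' Set.Icc t₀ (t₀ + T)) - sInf (Cg '' Set.Icc t₀ (t₀ + T)) - K * Z / η_B) * T * M) :=
  savings_lower_bound_general t₀ T K Z η_B M hT hM hZ hη Cg u hCg0 hbdd hKsmall hu hJp hJm hintu hub
end

section
/- Suppose u : [t₀, t₀+T] → ℝ is a feasible battery control with E_B(t₀) = 0, E_B ≥ 0, E_B' = u/η_B on {u < 0} and E_B' = η_B·u on {u ≥ 0} (η_B ∈ (0,1]), and u(t) ≤ D + η_pv·P_pv(t) − P_load(t) for all t. If D + η_pv·P_pv(t₀) − P_load(t₀) < 0 (i.e., t₀ ∈ S₁) and the data are continuous, then no such feasible control exists. -/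
/-! Just after `t₀` the upper bound on `u` is still negative by continuity, so the battery is
discharging there and its charge is strictly decreasing. Since the charge starts at `0`, it
becomes negative immediately. -/

open Set

lemma exists_Ico_forall_neg_of_continuousWithinAt {g : ℝ → ℝ} {a b : ℝ} (hab : a < b)
    (hg : ContinuousWithinAt g (Icc a b) a) (ha : g a < 0) :
    ∃ c ∈ Ioc a b, ∀ x ∈ Ico a c, g x < 0 :=
  (mem_nhdsGE_iff_exists_mem_Ioc_Ico_subset hab).1 <|
    (continuousWithinAt_Icc_iff_Ici hab).1 hg |>.eventually (gt_mem_nhds ha)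

lemma strictAntiOn_of_hasDerivWithinAt_neg_of_subset {f f' : ℝ → ℝ} {D s : Set ℝ}
    (hD : Convex ℝ D) (hDs : D ⊆ s) (hf : ∀ x ∈ D, HasDerivWithinAt f (f' x) s x)
    (hf' : ∀ x ∈ D, f' x < 0) : StrictAntiOn f D :=
  strictAntiOn_of_hasDerivWithinAt_neg hD
    (fun x hx ↦ (hf x hx).continuousWithinAt.mono hDs)
    (fun x hx ↦ (hf x (interior_subset hx)).mono (interior_subset.trans hDs))
    (fun x hx ↦ hf' x (interior_subset hx))

theorem no_feasible_control_general (t₀ T D η_pv η_B : ℝ) (hT : 0 < T)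
    (hη : 0 < η_B)
    (Ppv Pload u E_B : ℝ → ℝ)
    (hPpvcont : ContinuousOn Ppv (Set.Icc t₀ (t₀ + T)))
    (hPloadcont : ContinuousOn Pload (Set.Icc t₀ (t₀ + T)))
    (hu : ∀ t ∈ Set.Icc t₀ (t₀ + T), u t ≤ D + η_pv * Ppv t - Pload t)
    (hE0 : E_B t₀ = 0)
    (hEnn : ∀ t ∈ Set.Icc t₀ (t₀ + T), 0 ≤ E_B t)
    (hderiv : ∀ t ∈ Set.Icc t₀ (t₀ + T),
      HasDerivWithinAt E_B (if u t < 0 then u t / η_B else η_B * u t)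
        (Set.Icc t₀ (t₀ + T)) t)
    (ht0 : D + η_pv * Ppv t₀ - Pload t₀ < 0) :
    False := by
  have hlt : t₀ < t₀ + T := by linarith
  have hbound : ContinuousWithinAt (fun t ↦ D + η_pv * Ppv t - Pload t) (Icc t₀ (t₀ + T)) t₀ :=
    (continuousOn_const.add (continuousOn_const.mul hPpvcont) |>.sub hPloadcont) t₀
      (left_mem_Icc.2 hlt.le)
  obtain ⟨c, hc, hneg⟩ := exists_Ico_forall_neg_of_continuousWithinAt hlt hbound ht0
  have hsub : Ico t₀ c ⊆ Icc t₀ (t₀ + T) := Ico_subset_Icc_self.trans (Icc_subset_Icc_right hc.2)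
  have hdecr : StrictAntiOn E_B (Ico t₀ c) :=
    strictAntiOn_of_hasDerivWithinAt_neg_of_subset (convex_Ico t₀ c) hsub
      (fun x hx ↦ hderiv x (hsub hx)) fun x hx ↦ by
        have hux : u x < 0 := (hu x (hsub hx)).trans_lt (hneg x hx)
        rw [if_pos hux]
        exact div_neg_of_neg_of_pos hux hη
  obtain ⟨t₁, ht₀₁, ht₁c⟩ := exists_between hc.1
  have hE₁ : E_B t₁ < 0 :=
    hE0 ▸ hdecr (left_mem_Ico.2 hc.1) ⟨ht₀₁.le, ht₁c⟩ ht₀₁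
  exact (hEnn t₁ (hsub ⟨ht₀₁.le, ht₁c⟩)).not_gt hE₁

theorem no_feasible_control (t₀ T D η_pv η_B : ℝ) (hT : 0 < T)
    (hη : 0 < η_B) (hη1 : η_B ≤ 1)
    (Ppv Pload u E_B : ℝ → ℝ)
    (hucont : ContinuousOn u (Set.Icc t₀ (t₀ + T)))
    (hPpvcont : ContinuousOn Ppv (Set.Icc t₀ (t₀ + T)))
    (hPloadcont : ContinuousOn Pload (Set.Icc t₀ (t₀ + T)))
    (hu : ∀ t ∈ Set.Icc t₀ (t₀ + T), u t ≤ D + η_pv * Ppv t - Pload t)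
    (hE0 : E_B t₀ = 0)
    (hEnn : ∀ t ∈ Set.Icc t₀ (t₀ + T), 0 ≤ E_B t)
    (hderiv : ∀ t ∈ Set.Icc t₀ (t₀ + T),
      HasDerivWithinAt E_B (if u t < 0 then u t / η_B else η_B * u t)
        (Set.Icc t₀ (t₀ + T)) t)
    (ht0 : D + η_pv * Ppv t₀ - Pload t₀ < 0) :
    False :=
  no_feasible_control_general t₀ T D η_pv η_B hT hη Ppv Pload u E_B hPpvcont hPloadcont hu hE0 hEnn
    hderiv ht0
end

section
/- Let J : ℝ≥0 → ℝ be non-increasing, let c ≥ 0 be its critical value, and suppose a grid C_i = C_ub − i·τ (i = 0, 1, …, L) with C_ub ≥ c, step τ > 0, and L = ⌈(C_ub − C_lb)/τ⌉ where C_lb ≤ c. If the algorithm returns C_{i−1} where i is the smallest index ≥ 1 with J(C_i) > J(C_ub) (returning C_L if no such i exists), then the returned value lies in [c, c + τ). -/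
theorem grid_search_correct (J : ℝ → ℝ)
    (hmono : ∀ x y : ℝ, x ≤ y → J y ≤ J x)
    (c C_lb C_ub τ : ℝ) (hc : 0 ≤ c) (hτ : 0 < τ)
    (hcrit1 : ∀ x < c, J x > J c) (hcrit2 : ∀ x ≥ c, J x = J c)
    (hlb : C_lb ≤ c) (hub : c ≤ C_ub)
    (L : ℕ) (hL : L = ⌈(C_ub - C_lb) / τ⌉₊)
    (Cgrid : ℕ → ℝ) (hC : ∀ i : ℕ, Cgrid i = C_ub - i * τ)
    (out : ℝ)
    (hout : (∃ i : ℕ, 1 ≤ i ∧ i ≤ L ∧ J (Cgrid i) > J C_ub ∧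
              (∀ j : ℕ, 1 ≤ j → j < i → ¬ J (Cgrid j) > J C_ub) ∧
              out = Cgrid (i - 1)) ∨
            ((∀ i : ℕ, 1 ≤ i → i ≤ L → ¬ J (Cgrid i) > J C_ub) ∧ out = Cgrid L)) :
    c ≤ out ∧ out < c + τ := by
  have hJub : J C_ub = J c := hcrit2 C_ub hub
  have hkey : ∀ x, J x > J C_ub ↔ x < c := by
    intro x
    rw [hJub]
    constructor
    · intro h
      by_contra hx
      push_neg at hx
      rw [hcrit2 x hx] at h
      exact lt_irrefl _ h
    · exact hcrit1 x
  have hLτ : C_ub - L * τ ≤ C_lb := by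
    have h1 : (C_ub - C_lb) / τ ≤ (L : ℝ) := by
      rw [hL]; exact Nat.le_ceil _
    have := (div_le_iff₀ hτ).mp h1
    linarith
  rcases hout with ⟨i, hi1, hiL, hJi, hprev, hout⟩ | ⟨hall, hout⟩
  · have hci : Cgrid i < c := (hkey _).mp hJi
    constructor
    · rcases Nat.lt_or_ge i 2 with h2 | h2
      · interval_cases i
        rw [hout, hC]
        simpa using hub
      · have hj := hprev (i-1) (by omega) (by omega)
        rw [hkey] at hj
        push_neg at hj
        rw [hout]; exact hj
    · have heq : Cgrid (i-1) = Cgrid i + τ := by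
        rw [hC, hC]
        have : ((i-1 : ℕ) : ℝ) = (i : ℝ) - 1 := by
          rw [Nat.cast_sub hi1]; norm_num
        rw [this]; ring
      rw [hout, heq]; linarith
  · have hCL : Cgrid L ≤ C_lb := by rw [hC]; exact hLτ
    constructor
    · rcases Nat.eq_zero_or_pos L with h0 | hpos
      · rw [hout, h0, hC]; simpa using hub
      · have h := hall L hpos le_rfl
        rw [hkey] at h; push_neg at h
        rw [hout]; exact h
    · rw [hout]; linarith
end
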